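/- arXiv:2512.16062 — 5 statements merged into one kernel-verified Lean document; each statement's English description precedes it below -/
import Mathlib

section
/- Greedy coloring lemma (Erdős): Let G be a graph on n vertices and let m₀, r be positive integers such that every induced subgraph G' of G on at least m₀ vertices contains an independent set of size at least r. Then χ(G) ≤ n/r + m₀. -/
/-! While at least `m₀` vertices remain, remove an independent set of size `r` and give it a
fresh colour; this happens at most `n / r` times. The fewer than `m₀` vertices left over
receive pairwise distinct colours. -/

open SimpleGraph Finset

/-- The independence number: the clique number of the complement. -/
noncomputable def indepNum {V : Type*} (G : SimpleGraph V) : ℕ :=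
  Gᶜ.cliqueNum

/-- The chromatic number as a natural number. -/
noncomputable def chromNum {V : Type*} (G : SimpleGraph V) : ℕ :=
  G.chromaticNumber.toNat

/-- The two-color Ramsey number `R(s,t)`: least `n` such that every graph on `n`
vertices contains a clique of size `s` or an independent set of size `t`. -/
noncomputable def ramsey (s t : ℕ) : ℕ :=
  sInf {n | ∀ G : SimpleGraph (Fin n),
    (∃ A : Finset (Fin n), G.IsNClique s A) ∨ (∃ B : Finset (Fin n), Gᶜ.IsNClique t B)}

namespace SimpleGraph

variable {V : Type*} {G : SimpleGraph V}

theorem Colorable.induce_union_of_isIndepSet {s t : Set V} {k : ℕ}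
    (hs : (G.induce s).Colorable k) (ht : G.IsIndepSet t) :
    (G.induce (s ∪ t)).Colorable (k + 1) := by
  classical
  obtain ⟨C⟩ := hs
  refine ⟨Coloring.mk
    (fun v ↦ if hv : v.1 ∈ s then (C ⟨v, hv⟩).castSucc else Fin.last k) ?_⟩
  rintro ⟨v, hv⟩ ⟨w, hw⟩ hadj
  by_cases hvs : v ∈ s <;> by_cases hws : w ∈ s <;>
    simp only [hvs, hws, dite_true, dite_false, ne_eq]
  · exact fun hC ↦
      C.valid (v := ⟨v, hvs⟩) (w := ⟨w, hws⟩) hadj (Fin.castSucc_injective _ hC)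
  · exact (Fin.castSucc_lt_last _).ne
  · exact (Fin.castSucc_lt_last _).ne'
  · exact absurd hadj (ht (hv.resolve_left hvs) (hw.resolve_left hws) (G.ne_of_adj hadj))

theorem colorable_induce_card (s : Finset V) : (G.induce (s : Set V)).Colorable #s := by
  simpa using (G.induce (s : Set V)).colorable_of_fintype

theorem colorable_induce_of_forall_exists_isNIndepSet {m₀ r : ℕ} (hr : 0 < r)
    (h : ∀ S : Finset V, m₀ ≤ #S → ∃ T ⊆ S, G.IsNIndepSet r T) (s : Finset V) :
    (G.induce (s : Set V)).Colorable (#s / r + m₀) := by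
  classical
  induction s using Finset.strongInduction with
  | H s ih =>
    by_cases hs : #s < m₀
    · exact (colorable_induce_card s).mono (hs.le.trans (Nat.le_add_left _ _))
    obtain ⟨T, hTs, hT⟩ := h s (by omega)
    have hrs : r ≤ #s := hT.card_eq ▸ card_le_card hTs
    have hrest := ih (s \ T) (sdiff_ssubset hTs (card_pos.mp (hT.card_eq ▸ hr)))
    rw [card_sdiff_of_subset hTs, hT.card_eq] at hrest
    have hcover : ((s \ T : Finset V) : Set V) ∪ T = s := by
      rw [← coe_union, sdiff_union_of_subset hTs]
    have hcol := hrest.induce_union_of_isIndepSet hT.isIndepSet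
    rw [hcover] at hcol
    refine hcol.mono (le_of_eq ?_)
    rw [Nat.div_eq_sub_div hr hrs]
    omega

end SimpleGraph

theorem chromNum_le_of_colorable {V : Type*} {G : SimpleGraph V} {k : ℕ} (hG : G.Colorable k) :
    chromNum G ≤ k :=
  ENat.toNat_le_of_le_natCast hG.chromaticNumber_le

theorem greedy_coloring_lemma_general (n m₀ r : ℕ) (hr : 0 < r)
    (G : SimpleGraph (Fin n))
    (h : ∀ S : Finset (Fin n), m₀ ≤ S.card → ∃ T ⊆ S, Gᶜ.IsNClique r T) :
    (chromNum G : ℝ) ≤ (n : ℝ) / (r : ℝ) + (m₀ : ℝ) := by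
  have hcol : G.Colorable (n / r + m₀) := by
    have hind := colorable_induce_of_forall_exists_isNIndepSet hr (by simpa using h) univ
    rwa [coe_univ, card_univ, Fintype.card_fin, colorable_congr G.induceUnivIso] at hind
  calc (chromNum G : ℝ) ≤ ((n / r + m₀ : ℕ) : ℝ) := mod_cast chromNum_le_of_colorable hcol
    _ ≤ n / r + m₀ := by push_cast; gcongr; exact Nat.cast_div_le

theorem greedy_coloring_lemma (n m₀ r : ℕ) (hm₀ : 0 < m₀) (hr : 0 < r)
    (G : SimpleGraph (Fin n))
    (h : ∀ S : Finset (Fin n), m₀ ≤ S.card → ∃ T ⊆ S, Gᶜ.IsNClique r T) :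
    (chromNum G : ℝ) ≤ (n : ℝ) / (r : ℝ) + (m₀ : ℝ) :=
  greedy_coloring_lemma_general n m₀ r hr G h
end

section
/- Erdős–Szekeres bound: for all positive integers s and t, the Ramsey number satisfies R(s,t) ≤ C(s+t−2, s−1). -/
open SimpleGraph Finset

/-!
Pick a vertex `v` of a vertex set `U`. Its neighbours and non-neighbours in `U` number `#U - 1`
in total, so by Pascal's rule `C(s+t+2, s+1) = C(s+t+1, s) + C(s+t+1, s+1)` one of them is large
enough for induction: an `s`-clique among the neighbours, or a `t`-independent set among the
non-neighbours, extends by `v`; the two cases are exchanged by `G ↦ Gᶜ`.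
-/

namespace SimpleGraph

lemma exists_isNClique_one_of_nonempty {V : Type*} {G : SimpleGraph V} {U : Finset V}
    (hU : U.Nonempty) :
    ∃ A ⊆ U, G.IsNClique 1 A :=
  let ⟨v, hv⟩ := hU
  ⟨{v}, singleton_subset_iff.2 hv, isNClique_singleton.2 rfl⟩

variable {V : Type*} [DecidableEq V] (G : SimpleGraph V) [DecidableRel G.Adj]

lemma card_filter_adj_add_card_filter_compl_adj {U : Finset V} {v : V} (hv : v ∈ U) :
    #(U.filter (G.Adj v)) + #(U.filter (Gᶜ.Adj v)) + 1 = #U := by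
  have hG : U.filter (G.Adj v) = (U.erase v).filter (G.Adj v) := by
    ext u
    simp only [mem_filter, mem_erase]
    exact ⟨fun h => ⟨⟨h.2.ne', h.1⟩, h.2⟩, fun h => ⟨h.1.2, h.2⟩⟩
  have hGc : U.filter (Gᶜ.Adj v) = (U.erase v).filter (fun u => ¬G.Adj v u) := by
    ext u
    simp only [mem_filter, mem_erase, compl_adj]
    exact ⟨fun h => ⟨⟨h.2.1.symm, h.1⟩, h.2.2⟩, fun h => ⟨h.1.2, h.1.1.symm, h.2⟩⟩
  rw [hG, hGc, card_filter_add_card_filter_not, card_erase_add_one hv]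

variable {G}

lemma exists_isNClique_succ_of_subset_filter_adj {U A : Finset V} {v : V} {n : ℕ} (hv : v ∈ U)
    (hAU : A ⊆ U.filter (G.Adj v)) (hA : G.IsNClique n A) :
    ∃ B ⊆ U, G.IsNClique (n + 1) B :=
  ⟨insert v A, insert_subset hv (hAU.trans (filter_subset _ _)),
    hA.insert fun _ hb => (mem_filter.1 (hAU hb)).2⟩

variable (G)

theorem exists_isNClique_or_compl_of_choose_le :
    ∀ (s t : ℕ) (U : Finset V), (s + t).choose s ≤ #U →
      (∃ A ⊆ U, G.IsNClique (s + 1) A) ∨ ∃ B ⊆ U, Gᶜ.IsNClique (t + 1) B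
  | 0, _, U, hU => Or.inl <| exists_isNClique_one_of_nonempty <| card_pos.1 <| by simpa using hU
  | _ + 1, 0, U, hU => Or.inr <| exists_isNClique_one_of_nonempty <| card_pos.1 <| by simpa using hU
  | s + 1, t + 1, U, hU => by
    obtain ⟨v, hv⟩ : U.Nonempty := card_pos.1 <| (Nat.choose_pos (by omega)).trans_le hU
    have hsplit := G.card_filter_adj_add_card_filter_compl_adj hv
    have hpascal : (s + 1 + (t + 1)).choose (s + 1) =
        (s + (t + 1)).choose s + (s + 1 + t).choose (s + 1) := by
      rw [show s + 1 + (t + 1) = s + (t + 1) + 1 by omega, Nat.choose_succ_succ,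
        show s + (t + 1) = s + 1 + t by omega]
    by_cases hN : (s + (t + 1)).choose s ≤ #(U.filter (G.Adj v))
    · rcases exists_isNClique_or_compl_of_choose_le s (t + 1) _ hN with
        ⟨A, hAN, hA⟩ | ⟨B, hBN, hB⟩
      · exact Or.inl <| exists_isNClique_succ_of_subset_filter_adj hv hAN hA
      · exact Or.inr ⟨B, hBN.trans (filter_subset _ _), hB⟩
    · have hM : (s + 1 + t).choose (s + 1) ≤ #(U.filter (Gᶜ.Adj v)) := by omega
      rcases exists_isNClique_or_compl_of_choose_le (s + 1) t _ hM with
        ⟨A, hAM, hA⟩ | ⟨B, hBM, hB⟩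
      · exact Or.inl ⟨A, hAM.trans (filter_subset _ _), hA⟩
      · exact Or.inr <| exists_isNClique_succ_of_subset_filter_adj hv hBM hB

end SimpleGraph

lemma ramsey_zero_left (t : ℕ) : ramsey 0 t = 0 :=
  Nat.le_zero.1 <| Nat.sInf_le fun _ => Or.inl ⟨∅, isNClique_empty.2 rfl⟩

lemma ramsey_zero_right (s : ℕ) : ramsey s 0 = 0 :=
  Nat.le_zero.1 <| Nat.sInf_le fun _ => Or.inr ⟨∅, isNClique_empty.2 rfl⟩

lemma ramsey_succ_succ_le (s t : ℕ) : ramsey (s + 1) (t + 1) ≤ (s + t).choose s := by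
  refine Nat.sInf_le fun G => ?_
  classical
  simpa using G.exists_isNClique_or_compl_of_choose_le s t univ (by simp)

theorem erdos_szekeres_bound_general (s t : ℕ) :
    ramsey s t ≤ (s + t - 2).choose (s - 1) := by
  rcases s with _ | s
  · simp [ramsey_zero_left]
  rcases t with _ | t
  · simp [ramsey_zero_right]
  simpa [show s + 1 + (t + 1) - 2 = s + t by omega] using ramsey_succ_succ_le s t

theorem erdos_szekeres_bound (s t : ℕ) (hs : 0 < s) (ht : 0 < t) :
    ramsey s t ≤ (s + t - 2).choose (s - 1) :=
  erdos_szekeres_bound_general s t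
end

section
/- For real x in (0, 1/2], define φ(x) = (H(x) − δ·x·log₂ e)/√(x(1−x)) where H(x) = −x log₂ x − (1−x) log₂(1−x) and δ = 0.14/e. Then φ(x)² < 3.71943 for all x ∈ (0, 1/2]. -/
open SimpleGraph Finset

/-- The binary entropy function. -/
noncomputable def binEnt (x : ℝ) : ℝ :=
  -x * Real.logb 2 x - (1 - x) * Real.logb 2 (1 - x)

/-- The function φ from the proof of Theorem 1.3, with δ = 0.14/e. -/
noncomputable def phi (x : ℝ) : ℝ :=
  (binEnt x - (0.14 / Real.exp 1) * x * Real.logb 2 (Real.exp 1)) /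
    Real.sqrt (x * (1 - x))

/-! With `h` the binary entropy in nats, `φ(x) = (h(x) - δx) / (log 2 · √(x(1-x)))`, so it suffices
to bound `h(x) - δx` from above. Writing `x = (1 - t)/2`, the expansion
`log 2 - h(x) = ∑ₖ t^(2k) / (2k(2k-1))` has nonnegative terms, whence `h(x) ≤ log 2 - t²/2 - t⁴/12`;
this settles `x ≥ 1/16`, where the resulting polynomial inequality is tight to within `10⁻⁶` at
`t ≈ 0.0777`. For `x = y⁴ ≤ 1/16`, the bound `-y log y ≤ 1 - y` gives `h(x) ≤ 4y³ - 3y⁴`, which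
suffices with room to spare. -/

open Real

namespace Real

lemma two_mul_add_pow_three_div_le_log_sub_log {t : ℝ} (h0 : 0 ≤ t) (h1 : t < 1) :
    2 * (t + t ^ 3 / 3) ≤ log (1 + t) - log (1 - t) := by
  have hsum := hasSum_log_sub_log_of_abs_lt_one (abs_lt.2 ⟨by linarith, h1⟩)
  have := sum_le_hasSum (Finset.range 2) (fun k _ ↦ by positivity) hsum
  norm_num [Finset.sum_range_succ] at this
  linarith

lemma binEntropy_le_log_two_sub {t : ℝ} (ht : |t| < 1) :
    binEntropy ((1 - t) / 2) ≤ log 2 - t ^ 2 / 2 - t ^ 4 / 12 := by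
  wlog h0 : 0 ≤ t generalizing t
  · have := this (t := -t) (by rwa [abs_neg]) (by linarith)
    rw [← binEntropy_one_sub]
    convert this using 2 <;> ring
  have h1 : t < 1 := (abs_lt.1 ht).2
  set f : ℝ → ℝ := fun u ↦ binEntropy ((1 - u) / 2) + u ^ 2 / 2 + u ^ 4 / 12
  have hderiv (u : ℝ) (hu : u ∈ Set.Ioo 0 t) :
      HasDerivAt f (-(log (1 + u) - log (1 - u)) / 2 + u + u ^ 3 / 3) u := by
    have hp : (1 - u) / 2 ≠ 0 := by linarith [hu.2]
    have hp' : (1 - u) / 2 ≠ 1 := by linarith [hu.1]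
    have hlog : log (1 - (1 - u) / 2) - log ((1 - u) / 2) = log (1 + u) - log (1 - u) := by
      rw [show 1 - (1 - u) / 2 = (1 + u) / 2 by ring, log_div (by linarith [hu.1]) two_ne_zero,
        log_div (by linarith [hu.2]) two_ne_zero]
      ring
    have := (((hasDerivAt_binEntropy hp hp').comp u
      (((hasDerivAt_id u).const_sub 1).div_const 2)).add ((hasDerivAt_pow 2 u).div_const 2)).add
      ((hasDerivAt_pow 4 u).div_const 12)
    refine this.congr_deriv ?_
    rw [hlog]
    push_cast
    ring
  have hanti : AntitoneOn f (Set.Icc 0 t) := by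
    refine antitoneOn_of_hasDerivWithinAt_nonpos (convex_Icc 0 t) (by fun_prop)
      (f' := fun u ↦ -(log (1 + u) - log (1 - u)) / 2 + u + u ^ 3 / 3)
      (fun u hu ↦ ?_) (fun u hu ↦ ?_)
    · rw [interior_Icc] at hu
      exact (hderiv u hu).hasDerivWithinAt
    · rw [interior_Icc] at hu
      have := two_mul_add_pow_three_div_le_log_sub_log hu.1.le (hu.2.trans h1)
      linarith
  have := hanti ⟨le_rfl, h0⟩ ⟨h0, le_rfl⟩ h0
  simp only [f, sub_zero, one_div, binEntropy_two_inv] at this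
  norm_num at this
  linarith

lemma binEntropy_pow_succ_le {y : ℝ} (n : ℕ) (hy0 : 0 ≤ y) (hy1 : y ≤ 1) :
    binEntropy (y ^ (n + 1)) ≤ (n + 1) * y ^ n * (1 - y) + y ^ (n + 1) := by
  have hneg : negMulLog (y ^ (n + 1)) = (n + 1) * y ^ n * negMulLog y := by
    simp only [negMulLog, log_pow]
    push_cast
    ring
  rw [binEntropy_eq_negMulLog_add_negMulLog_one_sub, hneg]
  have h1 := negMulLog_le_one_sub_self hy0
  have h2 := negMulLog_le_one_sub_self (x := 1 - y ^ (n + 1)) (by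
    have := pow_le_one₀ hy0 hy1 (n := n + 1); linarith)
  have := mul_le_mul_of_nonneg_left h1 (by positivity : (0 : ℝ) ≤ (n + 1) * y ^ n)
  linarith

end Real

lemma phi_eq (x : ℝ) :
    phi x = (binEntropy x - 0.14 / exp 1 * x) / (log 2 * √(x * (1 - x))) := by
  have hlog2 : log 2 ≠ 0 := (log_pos one_lt_two).ne'
  rw [phi, binEnt, binEntropy_eq_negMulLog_add_negMulLog_one_sub, div_mul_eq_div_div]
  simp only [negMulLog, logb, log_exp]
  field_simp
  ring

lemma binEntropy_sub_mul_nonneg {x : ℝ} (hx : 0 < x) (hx2 : x ≤ 1 / 2) :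
    0 ≤ binEntropy x - 0.14 / exp 1 * x := by
  have hlog : log x ≤ -log 2 := by
    simpa [log_inv] using log_le_log hx hx2
  have hc : 0.14 / exp 1 ≤ log 2 :=
    (div_le_self (by norm_num) (one_le_exp zero_le_one)).trans (by linarith [log_two_gt_d9])
  have := negMulLog_nonneg (x := 1 - x) (by linarith) (by linarith)
  rw [binEntropy_eq_negMulLog_add_negMulLog_one_sub, negMulLog]
  nlinarith [mul_le_mul_of_nonneg_left hlog hx.le, mul_le_mul_of_nonneg_right hc hx.le]

lemma sq_binEntropy_sub_mul_lt_of_le {x : ℝ} (hx : 0 < x) (hx16 : x ≤ 1 / 16) :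
    (binEntropy x - 0.14 / exp 1 * x) ^ 2 < 3.71943 * log 2 ^ 2 * (x * (1 - x)) := by
  have hF := binEntropy_sub_mul_nonneg hx (by linarith)
  obtain ⟨y, hy0, rfl⟩ : ∃ y, 0 < y ∧ y ^ 4 = x :=
    ⟨x ^ ((4 : ℕ)⁻¹ : ℝ), by positivity, rpow_inv_natCast_pow hx.le four_ne_zero⟩
  have hy2 : y ≤ 1 / 2 := by
    rw [← pow_le_pow_iff_left₀ hy0.le (by norm_num) four_ne_zero]
    linarith
  have hU : binEntropy (y ^ 4) - 0.14 / exp 1 * y ^ 4 ≤ y ^ 2 * (y * (4 - 3 * y)) := by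
    have hH := binEntropy_pow_succ_le 3 hy0.le (by linarith)
    have hδ : 0 ≤ 0.14 / exp 1 * y ^ 4 := by positivity
    push_cast at hH
    linarith
  have hpoly : (y * (4 - 3 * y)) ^ 2 < 3.71943 * 0.6931471803 ^ 2 * (1 - y ^ 4) := by
    nlinarith
  have hlog2 : 0.6931471803 ^ 2 ≤ log 2 ^ 2 := pow_le_pow_left₀ (by norm_num) log_two_gt_d9.le 2
  calc (binEntropy (y ^ 4) - 0.14 / exp 1 * y ^ 4) ^ 2
      ≤ (y ^ 2 * (y * (4 - 3 * y))) ^ 2 := pow_le_pow_left₀ hF hU 2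
    _ = y ^ 4 * (y * (4 - 3 * y)) ^ 2 := by ring
    _ < y ^ 4 * (3.71943 * 0.6931471803 ^ 2 * (1 - y ^ 4)) := by gcongr
    _ ≤ 3.71943 * log 2 ^ 2 * (y ^ 4 * (1 - y ^ 4)) := by
      have : 0 ≤ 1 - y ^ 4 := by linarith
      nlinarith [mul_le_mul_of_nonneg_left hlog2 (mul_nonneg (pow_nonneg hy0.le 4) this)]

lemma sq_binEntropy_sub_mul_lt_of_ge {x : ℝ} (hx16 : 1 / 16 ≤ x) (hx2 : x ≤ 1 / 2) :
    (binEntropy x - 0.14 / exp 1 * x) ^ 2 < 3.71943 * log 2 ^ 2 * (x * (1 - x)) := by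
  have hF := binEntropy_sub_mul_nonneg (by linarith) hx2
  obtain ⟨t, ht0, ht1, rfl⟩ : ∃ t, 0 ≤ t ∧ t ≤ 7 / 8 ∧ (1 - t) / 2 = x :=
    ⟨1 - 2 * x, by linarith, by linarith, by ring⟩
  have hc : 0.14 / 2.7182818286 ≤ 0.14 / exp 1 :=
    div_le_div_of_nonneg_left (by norm_num) (exp_pos 1) exp_one_lt_d9.le
  have hU : binEntropy ((1 - t) / 2) - 0.14 / exp 1 * ((1 - t) / 2) ≤
      0.6931471808 - 0.14 / 2.7182818286 * (1 - t) / 2 - t ^ 2 / 2 - t ^ 4 / 12 := by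
    have := binEntropy_le_log_two_sub (abs_lt.2 ⟨by linarith, by linarith⟩ : |t| < 1)
    nlinarith [log_two_lt_d9, mul_le_mul_of_nonneg_right hc (by linarith : 0 ≤ (1 - t) / 2)]
  -- `0.077661` is where the difference of the two sides attains its minimum `≈ 10⁻⁶`; that
  -- difference minus its tangent line there, divided by `(t - 0.077661)²`, has positive
  -- Bernstein coefficients on `[0, 7/8]`.
  have hpoly : 4 * (0.6931471808 - 0.14 / 2.7182818286 * (1 - t) / 2 - t ^ 2 / 2 - t ^ 4 / 12) ^ 2
      < 3.71943 * 0.6931471803 ^ 2 * (1 - t ^ 2) := by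
    have bernstein (k : ℕ) : 0 ≤ (t - 0.077661) ^ 2 * (t ^ k * (7 / 8 - t) ^ (6 - k)) :=
      mul_nonneg (sq_nonneg _) (mul_nonneg (pow_nonneg ht0 k) (pow_nonneg (by linarith) _))
    linarith [bernstein 0, bernstein 1, bernstein 2, bernstein 3, bernstein 4, bernstein 5,
      bernstein 6]
  have hlog2 : 0.6931471803 ^ 2 ≤ log 2 ^ 2 := pow_le_pow_left₀ (by norm_num) log_two_gt_d9.le 2
  have h1t : 0 ≤ 1 - t ^ 2 := by nlinarith
  calc (binEntropy ((1 - t) / 2) - 0.14 / exp 1 * ((1 - t) / 2)) ^ 2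
      ≤ (0.6931471808 - 0.14 / 2.7182818286 * (1 - t) / 2 - t ^ 2 / 2 - t ^ 4 / 12) ^ 2 :=
        pow_le_pow_left₀ hF hU 2
    _ < 3.71943 * 0.6931471803 ^ 2 * (1 - t ^ 2) / 4 := by linarith
    _ ≤ 3.71943 * log 2 ^ 2 * ((1 - t) / 2 * (1 - (1 - t) / 2)) := by
      nlinarith [mul_le_mul_of_nonneg_right hlog2 h1t]

theorem phi_sq_lt (x : ℝ) (hx : 0 < x) (hx2 : x ≤ 1 / 2) :
    (phi x) ^ 2 < 3.71943 := by
  have hxx : 0 < x * (1 - x) := by nlinarith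
  have hgap : (binEntropy x - 0.14 / exp 1 * x) ^ 2 < 3.71943 * log 2 ^ 2 * (x * (1 - x)) := by
    rcases le_total x (1 / 16) with hx16 | hx16
    · exact sq_binEntropy_sub_mul_lt_of_le hx hx16
    · exact sq_binEntropy_sub_mul_lt_of_ge hx16 hx2
  rw [phi_eq, div_pow, mul_pow, sq_sqrt hxx.le, div_lt_iff₀ (by positivity)]
  linarith
end

section
/- For every ε > 0 there exists N such that for all n ≥ N: if G is a graph on n vertices and every induced subgraph of G on exactly m := ⌈n/(log₂ n)³⌉ vertices has an independent set of size at least (log₂ m)²/((M²+ε)·ω(G)) for some constant M > 0, then χ(G)/ω(G) ≤ (M² + 2ε)·n/(log₂ n)². -/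
open SimpleGraph Finset

/-!
Greedily colour `G`: as long as at least `m = ⌈n / (log₂ n)³⌉` vertices are uncoloured, some `m`
of them contain an independent set of size `k ≈ (log₂ m)² / ((M² + ε) ω)`, which gets a new
colour; the last fewer than `m` vertices get a colour each. Hence `χ ≤ m + 1 + n / k`, so
`χ / ω ≤ m + 1 + (M² + ε) n / (log₂ m)²`. Now `m + 1 = o(n / (log₂ n)²)`, and
`log₂ m = (1 + o(1)) log₂ n` turns `M² + ε` into anything larger, say `M² + 3ε/2`.
-/

open Filter Real

namespace SimpleGraph

variable {V : Type*} (G : SimpleGraph V) {m k : ℕ}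

theorem exists_nat_coloring_on_of_forall_card_eq [DecidableEq V] (hk : 1 ≤ k)
    (H : ∀ S : Finset V, #S = m → ∃ T ⊆ S, Gᶜ.IsClique (T : Set V) ∧ k ≤ #T) (W : Finset V) :
    ∃ C : V → ℕ, (∀ v ∈ W, C v < m + #W / k + 1) ∧
      ∀ v ∈ W, ∀ w ∈ W, G.Adj v w → C v ≠ C w := by
  induction W using Finset.strongInduction with
  | _ W ih =>
    by_cases hWm : #W < m
    · refine ⟨fun v => if h : v ∈ W then W.equivFin ⟨v, h⟩ else 0, fun v hv => ?_,
        fun v hv w hw hadj hC => G.ne_of_adj hadj ?_⟩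
      · simp only [dif_pos hv]
        exact (W.equivFin ⟨v, hv⟩).isLt.trans
          (hWm.trans_le (Nat.le_add_right_of_le (Nat.le_add_right _ _)))
      · simp only [dif_pos hv, dif_pos hw, Fin.val_inj, Equiv.apply_eq_iff_eq] at hC
        exact congrArg Subtype.val hC
    obtain ⟨S, hSW, hS⟩ := Finset.exists_subset_card_eq (not_lt.mp hWm)
    obtain ⟨T, hTS, hT, hkT⟩ := H S hS
    have hTW : T ⊆ W := hTS.trans hSW
    obtain ⟨C, hCbound, hC⟩ := ih (W \ T) (sdiff_ssubset hTW (card_pos.mp (by omega)))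
    have hfewer : #(W \ T) / k + 1 ≤ #W / k := by
      have : #(W \ T) + k ≤ #W := by rw [card_sdiff_of_subset hTW]; have := card_le_card hTW; omega
      calc #(W \ T) / k + 1 = (#(W \ T) + k) / k := (Nat.add_div_right _ (by omega)).symm
        _ ≤ #W / k := Nat.div_le_div_right this
    refine ⟨fun v => if v ∈ T then m + #(W \ T) / k + 1 else C v, fun v hv => ?_,
      fun v hv w hw hadj => ?_⟩
    · by_cases hvT : v ∈ T
      · simp only [if_pos hvT]; omega
      · simp only [if_neg hvT]
        have := hCbound v (mem_sdiff.mpr ⟨hv, hvT⟩)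
        omega
    · by_cases hvT : v ∈ T <;> by_cases hwT : w ∈ T <;> simp only [hvT, hwT, if_true, if_false]
      · exact absurd hadj (hT hvT hwT (G.ne_of_adj hadj)).2
      · exact (hCbound w (mem_sdiff.mpr ⟨hw, hwT⟩)).ne'
      · exact (hCbound v (mem_sdiff.mpr ⟨hv, hvT⟩)).ne
      · exact hC v (mem_sdiff.mpr ⟨hv, hvT⟩) w (mem_sdiff.mpr ⟨hw, hwT⟩) hadj

theorem colorable_of_forall_card_eq [Fintype V] (hk : 1 ≤ k)
    (H : ∀ S : Finset V, #S = m → ∃ T ⊆ S, Gᶜ.IsClique (T : Set V) ∧ k ≤ #T) :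
    G.Colorable (m + Fintype.card V / k + 1) := by
  classical
  obtain ⟨C, hCbound, hC⟩ := G.exists_nat_coloring_on_of_forall_card_eq hk H univ
  rw [colorable_iff_exists_bdd_nat_coloring]
  exact ⟨Coloring.mk C fun hadj => hC _ (mem_univ _) _ (mem_univ _) hadj,
    fun v => card_univ (α := V) ▸ hCbound v (mem_univ v)⟩

theorem chromNum_le_of_colorable {c : ℕ} (hc : G.Colorable c) : chromNum G ≤ c := by
  simpa only [chromNum, ENat.toNat_natCast] using
    ENat.toNat_le_toNat hc.chromaticNumber_le (ENat.natCast_ne_top c)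

theorem chromNum_le_of_forall_card_eq [Fintype V] {r : ℝ} (hr : 0 < r)
    (H : ∀ S : Finset V, #S = m → ∃ T ⊆ S, Gᶜ.IsClique (T : Set V) ∧ r ≤ #T) :
    (chromNum G : ℝ) ≤ m + Fintype.card V / r + 1 := by
  have hcol := G.colorable_of_forall_card_eq (Nat.one_le_iff_ne_zero.mpr (Nat.ceil_pos.mpr hr).ne')
    fun S hS => (H S hS).imp fun T ⟨hTS, hT, hrT⟩ => ⟨hTS, hT, Nat.ceil_le.mpr hrT⟩
  have hdiv : ((Fintype.card V / ⌈r⌉₊ : ℕ) : ℝ) ≤ Fintype.card V / r :=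
    Nat.cast_div_le.trans (div_le_div_of_nonneg_left (by positivity) hr (Nat.le_ceil r))
  have hχ : (chromNum G : ℝ) ≤ ((m + Fintype.card V / ⌈r⌉₊ + 1 : ℕ) : ℝ) := by
    exact_mod_cast G.chromNum_le_of_colorable hcol
  push_cast at hχ
  linarith

theorem chromNum_div_cliqueNum_le [Fintype V] {r : ℝ} (hr : 0 < r) (hω : 1 ≤ G.cliqueNum)
    (H : ∀ S : Finset V, #S = m → ∃ T ⊆ S, Gᶜ.IsClique (T : Set V) ∧ r / G.cliqueNum ≤ #T) :
    (chromNum G : ℝ) / G.cliqueNum ≤ m + 1 + Fintype.card V / r := by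
  have hω' : (1 : ℝ) ≤ G.cliqueNum := by exact_mod_cast hω
  have hχ := G.chromNum_le_of_forall_card_eq (div_pos hr (by linarith)) H
  calc (chromNum G : ℝ) / G.cliqueNum
      ≤ (m + 1) / G.cliqueNum + Fintype.card V / r := by
        rw [div_le_iff₀ (by linarith), add_mul, div_mul_cancel₀ _ (by linarith)]
        calc (chromNum G : ℝ) ≤ m + Fintype.card V / (r / G.cliqueNum) + 1 := hχ
          _ = _ := by rw [div_div_eq_mul_div]; ring
    _ ≤ m + 1 + Fintype.card V / r := by gcongr; exact div_le_self (by positivity) hω'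

end SimpleGraph

noncomputable def sampleSize (x : ℝ) : ℕ :=
  ⌈x / logb 2 x ^ 3⌉₊

theorem eventually_logb_pow_le_mul {b c : ℝ} (k : ℕ) (hc : 0 < c) :
    ∀ᶠ x in atTop, logb b x ^ k ≤ c * x := by
  filter_upwards [(isLittleO_pow_logb_id_atTop (b := b) (n := k)).def hc, eventually_ge_atTop 0]
    with x hx hx0
  simpa [Real.norm_eq_abs, abs_of_nonneg hx0] using (le_abs_self _).trans hx

theorem eventually_mul_logb_le_logb_sampleSize {c : ℝ} (hc : c < 1) :
    ∀ᶠ x in atTop, c * logb 2 x ≤ logb 2 (sampleSize x) := by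
  have hloglog : ∀ᶠ x in atTop, logb 2 (logb 2 x) ≤ (1 - c) / 3 * logb 2 x := by
    simpa only [pow_one] using (tendsto_logb_atTop one_lt_two).eventually
      (eventually_logb_pow_le_mul (b := 2) 1 (by linarith : 0 < (1 - c) / 3))
  filter_upwards [hloglog, (tendsto_logb_atTop one_lt_two).eventually_gt_atTop 0,
    eventually_gt_atTop 0] with x hloglog hl hx
  have hsample : x / logb 2 x ^ 3 ≤ sampleSize x := Nat.le_ceil _
  calc c * logb 2 x ≤ logb 2 x - 3 * logb 2 (logb 2 x) := by linarith
    _ = logb 2 (x / logb 2 x ^ 3) := by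
        rw [logb_div hx.ne' (by positivity), logb_pow]; push_cast; ring
    _ ≤ logb 2 (sampleSize x) := logb_le_logb_of_le one_lt_two (by positivity) hsample

theorem eventually_div_logb_sampleSize_sq_le {a b : ℝ} (ha : 0 < a) (hab : a < b) :
    ∀ᶠ x in atTop, 0 < logb 2 (sampleSize x) ∧
      a * x / logb 2 (sampleSize x) ^ 2 ≤ b * x / logb 2 x ^ 2 := by
  set c := √(a / b)
  have hb : 0 < b := ha.trans hab
  have hc : 0 < c := sqrt_pos.mpr (div_pos ha hb)
  have hc1 : c < 1 := (sqrt_lt' one_pos).mpr (by rw [one_pow]; exact (div_lt_one hb).mpr hab)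
  filter_upwards [eventually_mul_logb_le_logb_sampleSize hc1,
    (tendsto_logb_atTop one_lt_two).eventually_gt_atTop 0, eventually_ge_atTop 0]
    with x hL hl hx
  have hL0 : 0 < logb 2 (sampleSize x) := (mul_pos hc hl).trans_le hL
  refine ⟨hL0, ?_⟩
  calc a * x / logb 2 (sampleSize x) ^ 2 ≤ a * x / (c * logb 2 x) ^ 2 := by gcongr
    _ = b * x / logb 2 x ^ 2 := by
        rw [mul_pow, sq_sqrt (div_pos ha hb).le]; field_simp

theorem eventually_sampleSize_add_one_le {ε : ℝ} (hε : 0 < ε) :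
    ∀ᶠ x in atTop, (sampleSize x : ℝ) + 1 ≤ ε * x / logb 2 x ^ 2 := by
  filter_upwards [eventually_logb_pow_le_mul (b := 2) 3 (by norm_num : (0 : ℝ) < 1 / 2),
    (tendsto_logb_atTop one_lt_two).eventually_ge_atTop (2 / ε), eventually_gt_atTop 0]
    with x hcube hl hx
  have hl0 : 0 < logb 2 x := (div_pos two_pos hε).trans_le hl
  have htwo : 2 ≤ x / logb 2 x ^ 3 := by rw [le_div_iff₀ (by positivity)]; linarith
  calc (sampleSize x : ℝ) + 1 ≤ 2 * (x / logb 2 x ^ 3) := by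
        have := Nat.ceil_lt_add_one (htwo.trans' zero_le_two)
        unfold sampleSize
        linarith
    _ = 2 / logb 2 x * (x / logb 2 x ^ 2) := by field_simp
    _ ≤ ε * (x / logb 2 x ^ 2) := by gcongr; rwa [div_le_iff₀ hl0, mul_comm, ← div_le_iff₀ hε]
    _ = ε * x / logb 2 x ^ 2 := by ring

theorem quantitative_upper_bound_general (ε M : ℝ) (hε : 0 < ε) :
    ∃ N : ℕ, ∀ n : ℕ, N ≤ n → ∀ G : SimpleGraph (Fin n), 1 ≤ G.cliqueNum →
      (∀ S : Finset (Fin n), S.card = ⌈(n : ℝ) / (Real.logb 2 n) ^ 3⌉₊ →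
        ∃ T ⊆ S, Gᶜ.IsClique (T : Set (Fin n)) ∧
          (Real.logb 2 (⌈(n : ℝ) / (Real.logb 2 n) ^ 3⌉₊ : ℝ)) ^ 2 /
            ((M ^ 2 + ε) * (G.cliqueNum : ℝ)) ≤ (T.card : ℝ)) →
      (chromNum G : ℝ) / (G.cliqueNum : ℝ) ≤
        (M ^ 2 + 2 * ε) * (n : ℝ) / (Real.logb 2 n) ^ 2 := by
  have hMε : 0 < M ^ 2 + ε := by positivity
  obtain ⟨N, hN⟩ := eventually_atTop.mp <| tendsto_natCast_atTop_atTop.eventually <|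
    (eventually_sampleSize_add_one_le (half_pos hε)).and <|
      eventually_div_logb_sampleSize_sq_le hMε (by linarith : M ^ 2 + ε < M ^ 2 + 3 / 2 * ε)
  refine ⟨N, fun n hn G hω hH => ?_⟩
  obtain ⟨hsample, hL, hlog⟩ := hN n hn
  calc (chromNum G : ℝ) / G.cliqueNum
      ≤ sampleSize n + 1 + n / (logb 2 (sampleSize n) ^ 2 / (M ^ 2 + ε)) := by
        simpa only [Fintype.card_fin] using G.chromNum_div_cliqueNum_le (by positivity) hω
          (by simpa only [div_div, sampleSize] using hH)
    _ = sampleSize n + 1 + (M ^ 2 + ε) * n / logb 2 (sampleSize n) ^ 2 := by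
        rw [div_div_eq_mul_div, mul_comm]
    _ ≤ ε / 2 * n / logb 2 n ^ 2 + (M ^ 2 + 3 / 2 * ε) * n / logb 2 n ^ 2 :=
        add_le_add hsample hlog
    _ = (M ^ 2 + 2 * ε) * n / logb 2 n ^ 2 := by ring

theorem quantitative_upper_bound (ε M : ℝ) (hε : 0 < ε) (hM : 0 < M) :
    ∃ N : ℕ, ∀ n : ℕ, N ≤ n → ∀ G : SimpleGraph (Fin n), 1 ≤ G.cliqueNum →
      (∀ S : Finset (Fin n), S.card = ⌈(n : ℝ) / (Real.logb 2 n) ^ 3⌉₊ →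
        ∃ T ⊆ S, Gᶜ.IsClique (T : Set (Fin n)) ∧
          (Real.logb 2 (⌈(n : ℝ) / (Real.logb 2 n) ^ 3⌉₊ : ℝ)) ^ 2 /
            ((M ^ 2 + ε) * (G.cliqueNum : ℝ)) ≤ (T.card : ℝ)) →
      (chromNum G : ℝ) / (G.cliqueNum : ℝ) ≤
        (M ^ 2 + 2 * ε) * (n : ℝ) / (Real.logb 2 n) ^ 2 :=
  quantitative_upper_bound_general ε M hε
end

section
/- Erdős' lower bound on f: for infinitely many n, there exists a graph G on n vertices with χ(G)/ω(G) ≥ (1/4 + o(1))·n/(log₂ n)²; more precisely, assuming R(k,k) ≥ 2^{k/2} for all k ≥ 2, for every n ≥ 2 there is a graph G on n vertices with χ(G)/ω(G) ≥ n/(2·log₂ n + 2)². -/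
/-!
Let `j` be least with `n < R(j,j)` and `k = j - 1`, so that `R(k,k) ≤ n`. A graph on `n`
vertices witnessing `n < R(j,j)` has `ω ≤ k` and `α ≤ k`; its colour classes are independent,
so `n ≤ χ α ≤ χ k` and `χ / ω ≥ n / k²`. Finally `2^{k/2} ≤ R(k,k) ≤ n` gives `k ≤ 2 log₂ n`
when `k ≥ 2`, and `k ≤ 2 ≤ 2 log₂ n + 2` otherwise.
-/

open SimpleGraph Finset

namespace SimpleGraph

variable {V : Type*} {G : SimpleGraph V}

lemma cliqueNum_lt_of_cliqueFree {k : ℕ} (h : G.CliqueFree k) : G.cliqueNum < k := by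
  obtain ⟨s, hs⟩ := G.exists_isNClique_cliqueNum
  exact lt_of_not_ge fun hk => hs.not_cliqueFree (h.mono hk)

lemma indepNum_lt_of_cliqueFree_compl {k : ℕ} (h : Gᶜ.CliqueFree k) : G.indepNum < k :=
  G.cliqueNum_compl ▸ cliqueNum_lt_of_cliqueFree h

lemma one_le_cliqueNum [Finite V] [Nonempty V] : 1 ≤ G.cliqueNum := by
  simpa using IsClique.card_le_cliqueNum (G := G) (t := {Classical.arbitrary V}) (tc := by simp)

lemma card_le_chromNum_mul_indepNum [Fintype V] : Fintype.card V ≤ chromNum G * G.indepNum := by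
  classical
  obtain ⟨C⟩ := G.colorable_chromaticNumber_of_fintype
  calc Fintype.card V ≤ G.indepNum * #(univ : Finset (Fin (chromNum G))) :=
        card_le_mul_card_image_of_maps_to (fun v _ => mem_univ (C v)) _ fun c _ =>
          IsIndepSet.card_le_indepNum fun v hv w hw =>
            C.isIndepSet_colorClass c (mem_filter.1 hv).2 (mem_filter.1 hw).2
    _ = chromNum G * G.indepNum := by rw [card_univ, Fintype.card_fin, mul_comm]

end SimpleGraph

lemma exists_cliqueFree_of_lt_ramsey {n s t : ℕ} (h : n < ramsey s t) :
    ∃ G : SimpleGraph (Fin n), G.CliqueFree s ∧ Gᶜ.CliqueFree t := by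
  simpa [CliqueFree, not_or] using Nat.notMem_of_lt_sInf h

lemma exists_lt_ramsey_diag (hR : ∀ k : ℕ, 2 ≤ k → (2 : ℝ) ^ ((k : ℝ) / 2) ≤ ramsey k k)
    (n : ℕ) : ∃ j, n < ramsey j j := by
  refine ⟨2 * n + 2, ?_⟩
  have h := hR (2 * n + 2) (by omega)
  rw [show ((2 * n + 2 : ℕ) : ℝ) / 2 = (n + 1 : ℕ) by push_cast; ring, Real.rpow_natCast] at h
  have h2 : (n : ℝ) < 2 ^ (n + 1) := by
    exact_mod_cast Nat.lt_two_pow_self.trans (Nat.pow_lt_pow_succ one_lt_two)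
  exact_mod_cast h2.trans_le h

lemma le_two_mul_logb_add_two_of_ramsey_le
    (hR : ∀ k : ℕ, 2 ≤ k → (2 : ℝ) ^ ((k : ℝ) / 2) ≤ ramsey k k) {n k : ℕ}
    (hn : 0 < n) (hk : ramsey k k ≤ n) : (k : ℝ) ≤ 2 * Real.logb 2 n + 2 := by
  have hlog : 0 ≤ Real.logb 2 n := Real.logb_nonneg one_lt_two (by exact_mod_cast hn)
  rcases lt_or_ge k 2 with hk2 | hk2
  · have : (k : ℝ) ≤ 2 := by exact_mod_cast hk2.le
    linarith
  · have : (k : ℝ) / 2 ≤ Real.logb 2 n := (Real.le_logb_iff_rpow_le one_lt_two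
      (by exact_mod_cast hn)).2 ((hR k hk2).trans (by exact_mod_cast hk))
    linarith

lemma natCast_div_sq_le_div {n χ ω k : ℕ} {L : ℝ} (hn : n ≤ χ * k) (hω : 0 < ω) (hωk : ω ≤ k)
    (hkL : k ≤ L) : (n : ℝ) / L ^ 2 ≤ χ / ω := by
  have hk : (0 : ℝ) < k := by exact_mod_cast hω.trans_le hωk
  calc (n : ℝ) / L ^ 2 ≤ n / (k : ℝ) ^ 2 := by gcongr
    _ ≤ (χ * k : ℕ) / (k : ℝ) ^ 2 := by gcongr
    _ = χ / k := by push_cast; field_simp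
    _ ≤ χ / ω := by gcongr

theorem erdos_lower_bound_f
    (hR : ∀ k : ℕ, 2 ≤ k → (2 : ℝ) ^ ((k : ℝ) / 2) ≤ (ramsey k k : ℝ)) :
    ∀ n : ℕ, 2 ≤ n → ∃ G : SimpleGraph (Fin n),
      (n : ℝ) / (2 * Real.logb 2 n + 2) ^ 2 ≤
        (chromNum G : ℝ) / (G.cliqueNum : ℝ) := by
  intro n hn
  have hex := exists_lt_ramsey_diag hR n
  obtain ⟨G, hω, hα⟩ := exists_cliqueFree_of_lt_ramsey (Nat.find_spec hex)
  have : Nonempty (Fin n) := ⟨⟨0, by omega⟩⟩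
  have hω1 : 1 ≤ G.cliqueNum := G.one_le_cliqueNum
  set k := Nat.find hex - 1
  have hωk : G.cliqueNum ≤ k := Nat.le_sub_one_of_lt (cliqueNum_lt_of_cliqueFree hω)
  have hαk : G.indepNum ≤ k := Nat.le_sub_one_of_lt (indepNum_lt_of_cliqueFree_compl hα)
  have hk : ramsey k k ≤ n := not_lt.1 (Nat.find_min hex (by omega))
  have hnk : n ≤ chromNum G * k := by
    simpa using G.card_le_chromNum_mul_indepNum.trans (Nat.mul_le_mul_left _ hαk)
  exact ⟨G, natCast_div_sq_le_div hnk hω1 hωk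
    (le_two_mul_logb_add_two_of_ramsey_le hR (by omega) hk)⟩
end
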